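/- The thresholds defined by α_t = [α (τ − λ) ( η γ̃_{S_0(t)} + ∑_{j≥1} δ^{t−ρ_j} γ_{S_j(t)} )] ∧ λ satisfy, for every T ≥ 1, the bound ∑_{t=1}^T δ^{T−t} α_t · 1{λ < p_t ≤ τ}/(τ − λ) ≤ α · (R_δ(T) + η). -/

import Mathlib

/-- The time `ρ_j` of the `j`-th rejection: `min {t ≥ 0 : ∑_{i=1}^t R_i ≥ j}`,
equal to `⊤` (infinity) if no such time exists. -/
noncomputable def rejTime (R : ℕ → ℝ) (j : ℕ) : ℕ∞ :=
  sInf {n : ℕ∞ | ∃ m : ℕ, n = (m : ℕ∞) ∧ (j : ℝ) ≤ ∑ i ∈ Finset.Icc 1 m, R i}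

open Classical in
/-- The number of candidate `p`-values `∑_{i=a}^b 1{λ < p_i ≤ τ}`. -/
noncomputable def candBetween (p : ℕ → ℝ) (lam tau : ℝ) (a b : ℕ) : ℕ :=
  ((Finset.Icc a b).filter fun i => lam < p i ∧ p i ≤ tau).card

/-- The candidate count `S_0(t) = 1 + ∑_{i=1}^{t−1} 1{λ < p_i ≤ τ}` (with `ρ_0 = −∞`). -/
noncomputable def candCount0 (p : ℕ → ℝ) (lam tau : ℝ) (t : ℕ) : ℕ :=
  1 + candBetween p lam tau 1 (t - 1)

/-- The term `δ^{t−ρ_j} γ_{S_j(t)}` where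
`S_j(t) = 1{t > ρ_j} + ∑_{i=ρ_j+1}^{t−1} 1{λ < p_i ≤ τ}`, interpreted as `0`
when `ρ_j = ∞`. -/
noncomputable def addisTerm (δ : ℝ) (γ : ℤ → ℝ) (p : ℕ → ℝ) (lam tau : ℝ)
    (t : ℕ) (ρ : ℕ∞) : ℝ :=
  ρ.recTopCoe 0 fun r =>
    δ ^ (t - r) * γ ((if r < t then 1 else 0) + candBetween p lam tau (r + 1) (t - 1))

/-!
Drop the clipping at `λ` and split the weighted sum into the `γ̃` part and one part per
rejection. The `k`-th candidate after the rejection time `ρ_j` carries `δ^{t-ρ_j} γ_k`, and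
`δ^{T-t} δ^{t-ρ_j} = δ^{T-ρ_j}`, so rejection `j` contributes at most
`δ^{T-ρ_j} ∑_k γ_k ≤ δ^{T-ρ_j}`; the rejection times are distinct points with `R_{ρ_j} = 1`,
so these add up to at most `R_δ(T)`. In the `γ̃` part, the `k`-th of the `n` candidates up to `T`
lies at least `n - k` steps before `T`, so its discount is at most `δ^{n-k}` and the part is at
most `∑_k δ^{n-k} γ̃_k ≤ 1`.
-/

open Finset

theorem Finset.sum_Icc_one_eq_sum_range {M : Type*} [AddCommMonoid M] (f : ℕ → M) (n : ℕ) :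
    ∑ k ∈ Icc 1 n, f k = ∑ k ∈ range n, f (1 + k) := by
  rw [← Ico_add_one_right_eq_Icc, sum_Ico_eq_sum_range, Nat.add_sub_cancel]

theorem Finset.sum_Icc_eq_sum_Icc_pred_add {M : Type*} [AddCommMonoid M] (f : ℕ → M) {n : ℕ}
    (hn : 1 ≤ n) : ∑ k ∈ Icc 1 n, f k = ∑ k ∈ Icc 1 (n - 1), f k + f n := by
  have := sum_Icc_succ_top (a := 1) (b := n - 1) (by omega) f
  rwa [Nat.sub_add_cancel hn] at this

theorem Finset.sum_card_filter_lt {α M : Type*} [LinearOrder α] [AddCommMonoid M] (s : Finset α)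
    (f : ℕ → M) :
    ∑ t ∈ s, f #{u ∈ s | u < t} = ∑ k ∈ range #s, f k := by
  induction s using Finset.induction_on_max with
  | empty => simp
  | insert a s hlt ih =>
    have has : a ∉ s := fun h => (hlt a h).false
    have hrank : ∀ t ∈ s, {u ∈ insert a s | u < t} = {u ∈ s | u < t} := fun t ht => by
      rw [filter_insert, if_neg (hlt t ht).asymm]
    have htop : {u ∈ insert a s | u < a} = s := by
      rw [filter_insert, if_neg (lt_irrefl a), filter_true_of_mem hlt]
    rw [sum_insert has, card_insert_of_notMem has, sum_range_succ, htop,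
      sum_congr rfl fun t ht => by rw [hrank t ht], ih, add_comm]

theorem Finset.card_le_card_filter_lt_add {s : Finset ℕ} {T : ℕ} (hs : s ⊆ Iic T) (t : ℕ) :
    #s ≤ #{u ∈ s | u < t} + 1 + (T - t) := by
  have hcover : s ⊆ ({u ∈ s | u < t} ∪ {t}) ∪ Ioc t T := by
    intro u hu
    have := mem_Iic.mp (hs hu)
    simp only [mem_union, mem_filter, hu, true_and, mem_singleton, mem_Ioc]
    omega
  calc #s ≤ #(({u ∈ s | u < t} ∪ {t}) ∪ Ioc t T) := card_le_card hcover
    _ ≤ #({u ∈ s | u < t} ∪ {t}) + #(Ioc t T) := card_union_le _ _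
    _ ≤ #{u ∈ s | u < t} + 1 + (T - t) := by
      rw [Nat.card_Ioc]
      exact Nat.add_le_add_right (card_union_le _ _) _

theorem Finset.sum_pow_mul_card_filter_lt_le {δ : ℝ} (hδ0 : 0 ≤ δ) (hδ1 : δ ≤ 1) {g : ℕ → ℝ}
    (hg : ∀ k, 0 ≤ g k) {s : Finset ℕ} {T : ℕ} (hs : s ⊆ Iic T) :
    ∑ t ∈ s, δ ^ (T - t) * g #{u ∈ s | u < t} ≤ ∑ k ∈ range #s, δ ^ (#s - 1 - k) * g k := by
  rw [← sum_card_filter_lt s fun k => δ ^ (#s - 1 - k) * g k]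
  refine sum_le_sum fun t _ => mul_le_mul_of_nonneg_right ?_ (hg _)
  have := card_le_card_filter_lt_add hs t
  exact pow_le_pow_of_le_one hδ0 hδ1 (by omega)

section rejTime

variable {R : ℕ → ℝ} {j j' r : ℕ}

theorem le_sum_of_rejTime_eq (h : rejTime R j = r) : (j : ℝ) ≤ ∑ i ∈ Icc 1 r, R i := by
  have hne : {n : ℕ∞ | ∃ m : ℕ, n = m ∧ (j : ℝ) ≤ ∑ i ∈ Icc 1 m, R i}.Nonempty := by
    by_contra hc
    simp [rejTime, Set.not_nonempty_iff_eq_empty.mp hc] at h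
  obtain ⟨m, hm, hle⟩ := csInf_mem hne
  unfold rejTime at h
  rw [h, Nat.cast_inj] at hm
  rwa [hm]

theorem sum_lt_of_lt_rejTime {m : ℕ} (h : rejTime R j = r) (hm : m < r) :
    ∑ i ∈ Icc 1 m, R i < j := by
  by_contra! hc
  have hmem : (m : ℕ∞) ∈ {n : ℕ∞ | ∃ m : ℕ, n = m ∧ (j : ℝ) ≤ ∑ i ∈ Icc 1 m, R i} :=
    ⟨m, rfl, hc⟩
  have := csInf_le (OrderBot.bddBelow _) hmem
  unfold rejTime at h
  rw [h, Nat.cast_le] at this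
  omega

theorem lt_rejTime_succ (hR : ∀ i, R i ≤ 1) (h : rejTime R (j + 1) = r) : j < r := by
  have hsum : ∑ i ∈ Icc 1 r, R i ≤ r := by
    simpa using sum_le_card_nsmul (Icc 1 r) R 1 fun i _ => hR i
  have := (le_sum_of_rejTime_eq h).trans hsum
  exact_mod_cast this

theorem apply_rejTime_succ_eq_one (hR : ∀ i, R i = 0 ∨ R i = 1) (h : rejTime R (j + 1) = r) :
    R r = 1 := by
  have hr : j < r := lt_rejTime_succ (fun i => by rcases hR i with hi | hi <;> simp [hi]) h
  have hle := le_sum_of_rejTime_eq h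
  have hlt := sum_lt_of_lt_rejTime h (m := r - 1) (by omega)
  rw [sum_Icc_eq_sum_Icc_pred_add R (by omega)] at hle
  rcases hR r with h0 | h1
  · linarith
  · exact h1

theorem le_of_rejTime_eq_rejTime (hR : ∀ i, R i ≤ 1) (h : rejTime R j = r)
    (h' : rejTime R j' = r) : j' ≤ j := by
  rcases Nat.eq_zero_or_pos r with rfl | hr
  · have h0 : (j' : ℝ) ≤ 0 := by simpa using le_sum_of_rejTime_eq h'
    have := Nat.cast_nonpos.mp h0
    omega
  have hle := le_sum_of_rejTime_eq h'
  have hlt := sum_lt_of_lt_rejTime h (m := r - 1) (by omega)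
  rw [sum_Icc_eq_sum_Icc_pred_add R hr] at hle
  have : (j' : ℝ) < j + 1 := by linarith [hR r]
  exact_mod_cast Nat.lt_succ_iff.mp (by exact_mod_cast this)

theorem sum_rejTime_succ_le (hR : ∀ i, R i = 0 ∨ R i = 1) (W : ℕ∞ → ℝ) {g : ℕ → ℝ}
    (hg : ∀ r, 0 ≤ g r) {T : ℕ} (hW : ∀ ρ : ℕ∞, W ρ ≤ if ρ ≤ T then g ρ.toNat else 0) (n : ℕ) :
    ∑ j ∈ range n, W (rejTime R (j + 1)) ≤ ∑ r ∈ Icc 1 T, g r * R r := by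
  have hR01 : ∀ i, 0 ≤ R i ∧ R i ≤ 1 := fun i => by rcases hR i with hi | hi <;> simp [hi]
  have hR1 : ∀ i, R i ≤ 1 := fun i => (hR01 i).2
  set J := {j ∈ range n | rejTime R (j + 1) ≤ T}
  set ρ : ℕ → ℕ := fun j => (rejTime R (j + 1)).toNat
  have hρ : ∀ j ∈ J, rejTime R (j + 1) = ρ j := fun j hj =>
    (ENat.natCast_toNat (ne_top_of_le_ne_top (ENat.natCast_ne_top T) (mem_filter.mp hj).2)).symm
  have hinj : Set.InjOn ρ J := fun j hj j' hj' hjj' => by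
    have := le_of_rejTime_eq_rejTime hR1 (hρ j hj) (hjj' ▸ hρ j' hj')
    have := le_of_rejTime_eq_rejTime hR1 (hρ j' hj') (hjj' ▸ hρ j hj)
    omega
  have hsub : J.image ρ ⊆ Icc 1 T := by
    intro r hr
    obtain ⟨j, hj, rfl⟩ := mem_image.mp hr
    have hle := (mem_filter.mp hj).2
    rw [hρ j hj, Nat.cast_le] at hle
    have := lt_rejTime_succ hR1 (hρ j hj)
    exact mem_Icc.mpr ⟨by omega, hle⟩
  calc ∑ j ∈ range n, W (rejTime R (j + 1))
      ≤ ∑ j ∈ range n, if rejTime R (j + 1) ≤ T then g (ρ j) else 0 := sum_le_sum fun j _ => hW _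
    _ = ∑ r ∈ J.image ρ, g r := by rw [← sum_filter, sum_image hinj]
    _ = ∑ r ∈ J.image ρ, g r * R r := sum_congr rfl fun r hr => by
        obtain ⟨j, hj, rfl⟩ := mem_image.mp hr
        rw [apply_rejTime_succ_eq_one hR (hρ j hj), mul_one]
    _ ≤ ∑ r ∈ Icc 1 T, g r * R r :=
        sum_le_sum_of_subset_of_nonneg hsub fun r _ _ => mul_nonneg (hg r) (hR01 r).1

end rejTime

open Classical in
noncomputable def candidates (p : ℕ → ℝ) (lam tau : ℝ) (a b : ℕ) : Finset ℕ :=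
  {i ∈ Icc a b | lam < p i ∧ p i ≤ tau}

section candidates

variable {p : ℕ → ℝ} {lam tau : ℝ}

theorem candBetween_eq_card (a b : ℕ) :
    candBetween p lam tau a b = #(candidates p lam tau a b) := rfl

theorem candBetween_of_lt {a b : ℕ} (h : b < a) : candBetween p lam tau a b = 0 := by
  simp [candBetween_eq_card, candidates, Icc_eq_empty_of_lt h]

theorem candBetween_pred_eq_card_filter_lt {a b t : ℕ} (ht : 1 ≤ t) (htb : t ≤ b) :
    candBetween p lam tau a (t - 1) = #{u ∈ candidates p lam tau a b | u < t} := by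
  rw [candBetween_eq_card]
  congr 1
  ext u
  simp only [candidates, mem_filter, mem_Icc]
  grind

theorem mem_Icc_of_mem_candidates {a b t : ℕ} (ht : t ∈ candidates p lam tau a b) :
    t ∈ Icc a b :=
  (mem_filter.mp ht).1

theorem candidates_subset_Iic (a b : ℕ) : candidates p lam tau a b ⊆ Iic b := fun _ ht =>
  mem_Iic.mpr (mem_Icc.mp (mem_Icc_of_mem_candidates ht)).2

theorem sum_mul_ite_eq_sum_candidates (f : ℕ → ℝ) (a b : ℕ) :
    ∑ t ∈ Icc a b, f t * (if lam < p t ∧ p t ≤ tau then (1 : ℝ) else 0)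
      = ∑ t ∈ candidates p lam tau a b, f t := by
  simp only [candidates, sum_filter]
  refine sum_congr rfl fun t _ => ?_
  split_ifs <;> simp_all

end candidates

section addisTerm

variable {δ : ℝ} {γ : ℤ → ℝ} {p : ℕ → ℝ} {lam tau : ℝ}

theorem addisTerm_top (t : ℕ) : addisTerm δ γ p lam tau t ⊤ = 0 := rfl

theorem addisTerm_coe_of_le (hγ0 : γ 0 = 0) {t r : ℕ} (h : t ≤ r) :
    addisTerm δ γ p lam tau t r = 0 := by
  simp only [addisTerm, ENat.recTopCoe_natCast, if_neg (not_lt.mpr h),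
    candBetween_of_lt (show t - 1 < r + 1 by omega)]
  simp [hγ0]

theorem pow_mul_addisTerm_coe_of_lt {t r T : ℕ} (hrt : r < t) (htT : t ≤ T) :
    δ ^ (T - t) * addisTerm δ γ p lam tau t r
      = δ ^ (T - r) * γ (1 + candBetween p lam tau (r + 1) (t - 1)) := by
  simp only [addisTerm, ENat.recTopCoe_natCast, if_pos hrt]
  rw [← mul_assoc, ← pow_add, show T - t + (t - r) = T - r by omega]

theorem addisTerm_rejTime_succ_eq_zero {R : ℕ → ℝ} (hR : ∀ i, R i ≤ 1) (hγ0 : γ 0 = 0)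
    {t j : ℕ} (h : t ≤ j) : addisTerm δ γ p lam tau t (rejTime R (j + 1)) = 0 := by
  by_cases hρ : rejTime R (j + 1) = ⊤
  · rw [hρ, addisTerm_top]
  · obtain ⟨r, hr⟩ := ENat.ne_top_iff_exists.mp hρ
    have := lt_rejTime_succ hR hr.symm
    rw [← hr, addisTerm_coe_of_le hγ0 (by omega)]

theorem tsum_addisTerm_rejTime_succ {R : ℕ → ℝ} (hR : ∀ i, R i ≤ 1) (hγ0 : γ 0 = 0)
    {t T : ℕ} (htT : t ≤ T) :
    ∑' j, addisTerm δ γ p lam tau t (rejTime R (j + 1))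
      = ∑ j ∈ range T, addisTerm δ γ p lam tau t (rejTime R (j + 1)) :=
  tsum_eq_sum fun j hj => addisTerm_rejTime_succ_eq_zero hR hγ0 (by simp at hj; omega)

theorem sum_candidates_pow_mul_addisTerm_le (hδ : 0 ≤ δ) (hγ0 : γ 0 = 0)
    (hγ_sum : ∀ T : ℕ, ∑ t ∈ Icc 1 T, γ (t : ℤ) ≤ 1)
    (T : ℕ) (ρ : ℕ∞) :
    ∑ t ∈ candidates p lam tau 1 T, δ ^ (T - t) * addisTerm δ γ p lam tau t ρ
      ≤ if ρ ≤ T then δ ^ (T - ρ.toNat) else 0 := by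
  induction ρ using ENat.recTopCoe with
  | top => simp [addisTerm_top]
  | coe r =>
    simp only [ENat.toNat_natCast, Nat.cast_le]
    split_ifs with hrT
    · set C := candidates p lam tau (r + 1) T
      have hsub : C ⊆ candidates p lam tau 1 T :=
        filter_subset_filter _ (Icc_subset_Icc_left (Nat.le_add_left 1 r))
      have hout : ∀ t ∈ candidates p lam tau 1 T, t ∉ C →
          δ ^ (T - t) * addisTerm δ γ p lam tau t r = 0 := fun t ht htC => by
        have htr : t ≤ r := by
          simp only [C, candidates, mem_filter, mem_Icc] at ht htC
          grind
        rw [addisTerm_coe_of_le hγ0 htr, mul_zero]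
      calc ∑ t ∈ candidates p lam tau 1 T, δ ^ (T - t) * addisTerm δ γ p lam tau t r
          = ∑ t ∈ C, δ ^ (T - t) * addisTerm δ γ p lam tau t r := (sum_subset hsub hout).symm
        _ = δ ^ (T - r) * ∑ t ∈ C, γ (1 + (#{u ∈ C | u < t} : ℕ)) := by
          rw [mul_sum]
          refine sum_congr rfl fun t ht => ?_
          have := mem_Icc.mp (mem_Icc_of_mem_candidates ht)
          rw [pow_mul_addisTerm_coe_of_lt (by omega) this.2,
            candBetween_pred_eq_card_filter_lt (by omega) this.2]
        _ = δ ^ (T - r) * ∑ k ∈ Icc 1 #C, γ k := by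
          rw [sum_card_filter_lt C fun k => γ (1 + k), sum_Icc_one_eq_sum_range]
          push_cast
          rfl
        _ ≤ δ ^ (T - r) := mul_le_of_le_one_right (pow_nonneg hδ _) (hγ_sum _)
    · refine (sum_eq_zero fun t ht => ?_).le
      have := mem_Icc.mp (mem_Icc_of_mem_candidates ht)
      rw [addisTerm_coe_of_le hγ0 (by omega), mul_zero]

theorem sum_candidates_pow_mul_candCount0_le (hδ0 : 0 ≤ δ) (hδ1 : δ ≤ 1) {γ' : ℕ → ℝ}
    (hγ'_pos : ∀ t, 1 ≤ t → 0 < γ' t)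
    (hγ'_sum : ∀ T : ℕ, 1 ≤ T → ∑ t ∈ Icc 1 T, δ ^ (T - t) * γ' t ≤ 1) (T : ℕ) :
    ∑ t ∈ candidates p lam tau 1 T, δ ^ (T - t) * γ' (candCount0 p lam tau t) ≤ 1 := by
  set C := candidates p lam tau 1 T
  calc ∑ t ∈ C, δ ^ (T - t) * γ' (candCount0 p lam tau t)
      = ∑ t ∈ C, δ ^ (T - t) * γ' (1 + #{u ∈ C | u < t}) := sum_congr rfl fun t ht => by
        have := mem_Icc.mp (mem_Icc_of_mem_candidates ht)
        rw [candCount0, candBetween_pred_eq_card_filter_lt this.1 this.2]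
    _ ≤ ∑ k ∈ range #C, δ ^ (#C - 1 - k) * γ' (1 + k) :=
        sum_pow_mul_card_filter_lt_le hδ0 hδ1 (fun k => (hγ'_pos _ (by omega)).le)
          (candidates_subset_Iic 1 T)
    _ = ∑ k ∈ Icc 1 #C, δ ^ (#C - k) * γ' k := by
        rw [sum_Icc_one_eq_sum_range]
        simp only [Nat.sub_sub]
    _ ≤ 1 := by
        rcases Nat.eq_zero_or_pos #C with hC | hC
        · simp [hC]
        · exact hγ'_sum _ hC

theorem pow_mul_div_le_of_eq_min {α η : ℝ} {γ' : ℕ → ℝ} {R : ℕ → ℝ} (hδ : 0 ≤ δ)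
    (hlamtau : lam < tau) (hR : ∀ i, R i ≤ 1) (hγ0 : γ 0 = 0) {a : ℝ} {t T : ℕ} (htT : t ≤ T)
    (ha : a = min (α * (tau - lam) * (η * γ' (candCount0 p lam tau t)
      + ∑' j, addisTerm δ γ p lam tau t (rejTime R (j + 1)))) lam) :
    δ ^ (T - t) * a / (tau - lam) ≤ α * (η * (δ ^ (T - t) * γ' (candCount0 p lam tau t))
      + ∑ j ∈ range T, δ ^ (T - t) * addisTerm δ γ p lam tau t (rejTime R (j + 1))) := by
  rw [tsum_addisTerm_rejTime_succ hR hγ0 htT] at ha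
  have hgap : 0 < tau - lam := sub_pos.mpr hlamtau
  calc δ ^ (T - t) * a / (tau - lam)
      ≤ δ ^ (T - t) * (α * (tau - lam) * (η * γ' (candCount0 p lam tau t)
        + ∑ j ∈ range T, addisTerm δ γ p lam tau t (rejTime R (j + 1)))) / (tau - lam) := by
        gcongr
        exact ha ▸ min_le_left _ _
    _ = _ := by
        rw [← mul_sum]
        field_simp

end addisTerm

theorem addis_decay_oracle_bound_general (δ α η lam tau : ℝ)
    (hδ : δ ∈ Set.Ioc (0 : ℝ) 1) (hα : α ∈ Set.Ioo (0 : ℝ) 1) (hη : 0 < η)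
    (hlamtau : lam < tau)
    (γ : ℤ → ℝ) (hγ_zero : ∀ t : ℤ, t ≤ 0 → γ t = 0)
    (hγ_sum : ∀ T : ℕ, ∑ t ∈ Finset.Icc 1 T, γ (t : ℤ) ≤ 1)
    (γ' : ℕ → ℝ) (hγ'_pos : ∀ t, 1 ≤ t → 0 < γ' t)
    (hγ'_sum : ∀ T : ℕ, 1 ≤ T → ∑ t ∈ Finset.Icc 1 T, δ ^ (T - t) * γ' t ≤ 1)
    (p : ℕ → ℝ)
    (R : ℕ → ℝ) (hR : ∀ t, R t = 0 ∨ R t = 1)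
    (A : ℕ → ℝ)
    (hA : ∀ t : ℕ,
      A t = min (α * (tau - lam) * (η * γ' (candCount0 p lam tau t)
              + ∑' j : ℕ, addisTerm δ γ p lam tau t (rejTime R (j + 1)))) lam)
    (T : ℕ) :
    ∑ t ∈ Finset.Icc 1 T,
        δ ^ (T - t) * A t * (if lam < p t ∧ p t ≤ tau then (1 : ℝ) else 0) / (tau - lam)
      ≤ α * ((∑ t ∈ Finset.Icc 1 T, δ ^ (T - t) * R t) + η) := by
  have hγ0 : γ 0 = 0 := hγ_zero 0 le_rfl
  have hR1 : ∀ i, R i ≤ 1 := fun i => by rcases hR i with hi | hi <;> simp [hi]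
  set C := candidates p lam tau 1 T
  set ρ : ℕ → ℕ∞ := fun j => rejTime R (j + 1)
  calc ∑ t ∈ Icc 1 T, δ ^ (T - t) * A t * (if lam < p t ∧ p t ≤ tau then (1 : ℝ) else 0)
        / (tau - lam)
      = ∑ t ∈ C, δ ^ (T - t) * A t / (tau - lam) := by
        rw [← sum_div, sum_mul_ite_eq_sum_candidates, sum_div]
    _ ≤ ∑ t ∈ C, α * (η * (δ ^ (T - t) * γ' (candCount0 p lam tau t))
          + ∑ j ∈ range T, δ ^ (T - t) * addisTerm δ γ p lam tau t (ρ j)) :=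
        sum_le_sum fun t ht => pow_mul_div_le_of_eq_min hδ.1.le hlamtau hR1 hγ0
          (mem_Icc.mp (mem_Icc_of_mem_candidates ht)).2 (hA t)
    _ = α * (η * ∑ t ∈ C, δ ^ (T - t) * γ' (candCount0 p lam tau t)
          + ∑ j ∈ range T, ∑ t ∈ C, δ ^ (T - t) * addisTerm δ γ p lam tau t (ρ j)) := by
        rw [← mul_sum, sum_add_distrib, ← mul_sum, sum_comm]
    _ ≤ α * (η * 1 + ∑ r ∈ Icc 1 T, δ ^ (T - r) * R r) := by
        gcongr
        · exact hα.1.le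
        · exact sum_candidates_pow_mul_candCount0_le hδ.1.le hδ.2 hγ'_pos hγ'_sum T
        · exact sum_rejTime_succ_le hR _ (fun r => pow_nonneg hδ.1.le _)
            (sum_candidates_pow_mul_addisTerm_le hδ.1.le hγ0 hγ_sum T) T
    _ = α * ((∑ t ∈ Icc 1 T, δ ^ (T - t) * R t) + η) := by ring

/-- The memory-decay ADDIS thresholds
`α_t = [α (τ−λ) (η γ̃_{S_0(t)} + ∑_{j≥1} δ^{t−ρ_j} γ_{S_j(t)})] ∧ λ`
satisfy `∑_{t=1}^T δ^{T−t} α_t 1{λ < p_t ≤ τ}/(τ−λ) ≤ α (R_δ(T) + η)` for every `T ≥ 1`. -/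
theorem addis_decay_oracle_bound (δ α η lam tau : ℝ)
    (hδ : δ ∈ Set.Ioc (0 : ℝ) 1) (hα : α ∈ Set.Ioo (0 : ℝ) 1) (hη : 0 < η)
    (hlam : 0 < lam) (hlamtau : lam < tau) (htau : tau < 1)
    (γ : ℤ → ℝ) (hγ_nonneg : ∀ t, 0 ≤ γ t) (hγ_zero : ∀ t : ℤ, t ≤ 0 → γ t = 0)
    (hγ_anti : ∀ s t : ℤ, 1 ≤ s → s ≤ t → γ t ≤ γ s)
    (hγ_sum : ∀ T : ℕ, ∑ t ∈ Finset.Icc 1 T, γ (t : ℤ) ≤ 1)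
    (γ' : ℕ → ℝ) (hγ'_pos : ∀ t, 1 ≤ t → 0 < γ' t)
    (hγ'_anti : ∀ s t : ℕ, 1 ≤ s → s ≤ t → γ' t ≤ γ' s)
    (hγ'_sum : ∀ T : ℕ, 1 ≤ T → ∑ t ∈ Finset.Icc 1 T, δ ^ (T - t) * γ' t ≤ 1)
    (p : ℕ → ℝ) (hp01 : ∀ t, p t ∈ Set.Icc (0 : ℝ) 1)
    (R : ℕ → ℝ) (hR : ∀ t, R t = 0 ∨ R t = 1)
    (A : ℕ → ℝ)
    (hA : ∀ t : ℕ,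
      A t = min (α * (tau - lam) * (η * γ' (candCount0 p lam tau t)
              + ∑' j : ℕ, addisTerm δ γ p lam tau t (rejTime R (j + 1)))) lam)
    (T : ℕ) (hT : 1 ≤ T) :
    ∑ t ∈ Finset.Icc 1 T,
        δ ^ (T - t) * A t * (if lam < p t ∧ p t ≤ tau then (1 : ℝ) else 0) / (tau - lam)
      ≤ α * ((∑ t ∈ Finset.Icc 1 T, δ ^ (T - t) * R t) + η) :=
  addis_decay_oracle_bound_general δ α η lam tau hδ hα hη hlamtau γ hγ_zero hγ_sum γ' hγ'_pos
    hγ'_sum p R hR A hA T
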